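/- arXiv:1302.3793 — 8 statements merged into one kernel-verified Lean document; each statement's English description precedes it below -/
import Mathlib

section
/- Let (R,C) be an n×n bimatrix game with payoffs in [0,1]. Fix any row i, let j be a pure best response of the column player to row i (i.e., j maximizes C_{i j'}), and let k be a pure best response of the row player to column j (i.e., k maximizes R_{k' j}). Then the mixed strategy pair (x*, y*) with x* = (1/2)e_i + (1/2)e_k and y* = e_j is a (1/2)-approximate Nash equilibrium of (R,C). -/
/-!
Against the pure column `j`, the row player's mixture earns `(R i j + R k j) / 2`, at least half of
the best deviation payoff `R k j`; since `R i' j ≤ R k j / 2 + R i' j / 2`, a deviation gains at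
most `1/2`. On the column side, half of the mass sits on row `i`, where `j` is already a best
response, and the other half can lose at most `1/2`.
-/

open Finset

section PureAndMidpoint

variable {ι : Type*} [Fintype ι] [DecidableEq ι]

lemma sum_mul_pure (j : ι) (g : ι → ℝ) :
    ∑ b, g b * (if b = j then (1:ℝ) else 0) = g j := by
  simp

lemma sum_midpoint_mul (i k : ι) (f : ι → ℝ) :
    ∑ a, ((if a = i then (1:ℝ)/2 else 0) + (if a = k then (1:ℝ)/2 else 0)) * f a
      = (f i + f k) / 2 := by
  simp only [add_mul, ite_mul, zero_mul, sum_add_distrib, sum_ite_eq', mem_univ, if_true]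
  ring

lemma sum_sum_mul_pure (x : ι → ℝ) (M : ι → ι → ℝ) (j : ι) :
    ∑ a, ∑ b, x a * M a b * (if b = j then (1:ℝ) else 0) = ∑ a, x a * M a j := by
  simp

end PureAndMidpoint

/-- The DMP algorithm gives a 1/2-approximate Nash equilibrium. -/
theorem stmt_0 (n : ℕ) (R C : Fin n → Fin n → ℝ)
    (hR : ∀ a b, R a b ∈ Set.Icc (0:ℝ) 1) (hC : ∀ a b, C a b ∈ Set.Icc (0:ℝ) 1)
    (i j k : Fin n)
    (hj : ∀ j', C i j' ≤ C i j)
    (hk : ∀ k', R k' j ≤ R k j) :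
    let x : Fin n → ℝ := fun a => (if a = i then (1:ℝ)/2 else 0) + (if a = k then (1:ℝ)/2 else 0)
    let y : Fin n → ℝ := fun b => if b = j then (1:ℝ) else 0
    (∀ i' : Fin n, ∑ b, R i' b * y b ≤ (∑ a, ∑ b, x a * R a b * y b) + 1/2) ∧
    (∀ j' : Fin n, ∑ a, x a * C a j' ≤ (∑ a, ∑ b, x a * C a b * y b) + 1/2) := by
  intro x y
  have hpure (g : Fin n → ℝ) : ∑ b, g b * y b = g j := sum_mul_pure j g
  have hmix (f : Fin n → ℝ) : ∑ a, x a * f a = (f i + f k) / 2 := sum_midpoint_mul i k f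
  have hvalue (M : Fin n → Fin n → ℝ) : ∑ a, ∑ b, x a * M a b * y b = (M i j + M k j) / 2 := by
    rw [← hmix fun a => M a j]
    exact sum_sum_mul_pure x M j
  refine ⟨fun i' => ?_, fun j' => ?_⟩
  · rw [hpure, hvalue]
    linarith [hk i', (hR i j).1, (hR i' j).2]
  · rw [hmix, hvalue]
    linarith [hj j', (hC k j).1, (hC k j').2]
end

section
/- Let (R,C) be an n×n bimatrix game with payoffs in [0,1]. Let i be a pure best response of the row player to column 1 (i maximizes R_{i' 1}) and j a pure best response of the column player to row 1 (j maximizes C_{1 j'}). Then the strategy pair (x,y) with x = (1/2)e_1 + (1/2)e_i and y = (1/2)e_1 + (1/2)e_j is a (3/4)-approximate Nash equilibrium. -/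
/-!
Write `z` for the first strategy. Against `y = (e_z + e_j)/2` any pure deviation `i'` of the row
player earns `(R i' z + R i' j)/2 ≤ (R i z + 1)/2`, because `i` is a best response to `z`. On the
other hand the payoff of `(x, y)` is the average of four nonnegative entries, one of which is
`R i z`, so it is at least `R i z / 4`. The gain is thus at most `1/2 + R i z / 4 ≤ 3/4`.
The column player's bound is the same argument for the transposed game.
-/

open Finset

variable {ι : Type*} [Fintype ι] [DecidableEq ι]

noncomputable def halfMix (p q : ι) (a : ι) : ℝ :=
  (if a = p then 1 / 2 else 0) + (if a = q then 1 / 2 else 0)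

lemma sum_mul_halfMix (f : ι → ℝ) (p q : ι) :
    ∑ b, f b * halfMix p q b = (f p + f q) / 2 := by
  simp only [halfMix, mul_add, mul_ite, mul_zero, sum_add_distrib, sum_ite_eq', mem_univ,
    if_true]
  ring

lemma sum_halfMix_mul (f : ι → ℝ) (p q : ι) :
    ∑ a, halfMix p q a * f a = (f p + f q) / 2 := by
  simp_rw [mul_comm (halfMix p q _)]
  exact sum_mul_halfMix f p q

lemma sum_sum_halfMix_mul_mul_halfMix (M : ι → ι → ℝ) (p q r s : ι) :
    ∑ a, ∑ b, halfMix p q a * M a b * halfMix r s b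
      = (M p r + M p s + M q r + M q s) / 4 := by
  simp_rw [sum_mul_halfMix (fun b => halfMix p q _ * M _ b), ← mul_add, mul_div_assoc,
    sum_halfMix_mul (fun a => (M a r + M a s) / 2)]
  ring

lemma sum_mul_halfMix_le_add_three_quarters (M : ι → ι → ℝ) (hM : ∀ a b, M a b ∈ Set.Icc (0:ℝ) 1)
    (z i j : ι) (hi : ∀ i', M i' z ≤ M i z) (i' : ι) :
    ∑ b, M i' b * halfMix z j b
      ≤ ∑ a, ∑ b, halfMix z i a * M a b * halfMix z j b + 3 / 4 := by
  rw [sum_mul_halfMix, sum_sum_halfMix_mul_mul_halfMix]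
  linarith [hi i', (hM i' j).2, (hM i z).2, (hM z z).1, (hM z j).1, (hM i j).1]

/-- With no communication, each player mixing uniformly between his first strategy and his
best response to the opponent's first strategy gives a 3/4-approximate Nash equilibrium. -/
theorem stmt_1 (n : ℕ) (hn : 0 < n) (R C : Fin n → Fin n → ℝ)
    (hR : ∀ a b, R a b ∈ Set.Icc (0:ℝ) 1) (hC : ∀ a b, C a b ∈ Set.Icc (0:ℝ) 1)
    (i j : Fin n)
    (hi : ∀ i', R i' ⟨0, hn⟩ ≤ R i ⟨0, hn⟩)
    (hj : ∀ j', C ⟨0, hn⟩ j' ≤ C ⟨0, hn⟩ j) :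
    let x : Fin n → ℝ :=
      fun a => (if a = (⟨0, hn⟩ : Fin n) then (1:ℝ)/2 else 0) + (if a = i then (1:ℝ)/2 else 0)
    let y : Fin n → ℝ :=
      fun b => (if b = (⟨0, hn⟩ : Fin n) then (1:ℝ)/2 else 0) + (if b = j then (1:ℝ)/2 else 0)
    (∀ i' : Fin n, ∑ b, R i' b * y b ≤ (∑ a, ∑ b, x a * R a b * y b) + 3/4) ∧
    (∀ j' : Fin n, ∑ a, x a * C a j' ≤ (∑ a, ∑ b, x a * C a b * y b) + 3/4) := by
  refine ⟨sum_mul_halfMix_le_add_three_quarters R hR _ i j hi, fun j' => ?_⟩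
  have hCt := sum_mul_halfMix_le_add_three_quarters (fun a b => C b a) (fun a b => hC b a)
    _ j i hj j'
  simp only [halfMix] at hCt
  rw [sum_comm] at hCt
  simpa only [mul_comm, mul_left_comm] using hCt
end

section
/- Under the hypotheses of the previous context: for every pure strategy i' of the row player, (1/2)R_{i'1} + (1/2)R_{i'j} − ((1/4)R_{11} + (1/4)R_{1j} + (1/4)R_{i1} + (1/4)R_{ij}) ≤ 3/4, where i maximizes R_{·1} and j is any column index. -/
theorem deviation_gain_le_three_quarters {ι κ : Type*} (R : ι → κ → ℝ)
    (hR : ∀ a b, R a b ∈ Set.Icc (0:ℝ) 1) {i i' r : ι} {k j : κ} (hi : R i' k ≤ R i k) :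
    (1/2) * R i' k + (1/2) * R i' j
      - ((1/4) * R r k + (1/4) * R r j + (1/4) * R i k + (1/4) * R i j) ≤ 3/4 := by
  -- `R i' k / 2 ≤ R i k / 2`, and the `R i k / 4` subtracted leaves `R i k / 4 ≤ 1/4`.
  have hik := (hR i k).2
  have hi'j := (hR i' j).2
  have hrk := (hR r k).1
  have hrj := (hR r j).1
  have hij := (hR i j).1
  linarith

/-- The row player's deviation-gain bound in the no-communication 3/4-approximation
algorithm: if `i` maximizes the first column `R · 1` and `j` is arbitrary, then for every
row `i'`, the gain from deviating is at most 3/4. -/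
theorem stmt_2 (n : ℕ) (hn : 0 < n) (R : Fin n → Fin n → ℝ)
    (hR : ∀ a b, R a b ∈ Set.Icc (0:ℝ) 1)
    (i : Fin n) (hi : ∀ i', R i' ⟨0, hn⟩ ≤ R i ⟨0, hn⟩) (j : Fin n) :
    ∀ i' : Fin n,
      (1/2) * R i' ⟨0, hn⟩ + (1/2) * R i' j
        - ((1/4) * R ⟨0, hn⟩ ⟨0, hn⟩ + (1/4) * R ⟨0, hn⟩ j
            + (1/4) * R i ⟨0, hn⟩ + (1/4) * R i j) ≤ 3/4 :=
  fun _ => deviation_gain_le_three_quarters R hR (hi _)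
end

section
/- Let n ≥ 1, k = ⌊√n⌋, and let M be the (n choose k) × n matrix whose rows are all 0/1 vectors with exactly k ones. For every mixed strategy x of the row player (with payoff matrix M) there exists a column m such that: for every mixed strategy y of the column player assigning probability at least p to column m, there exists a mixed strategy x* with x*^T M y − x^T M y ≥ (1 − k/n)(p − (1−p)/k) ≥ p − 1/k. -/
open Finset

/-- Auxiliary swap map: if `m ∉ S`, replace a `y`-minimal element of `S` by `m`. -/
noncomputable def swapFun {n : ℕ} (y : Fin n → ℝ) (m : Fin n) {c : ℕ}
    (S : {s : Finset (Fin n) // s.card = c}) : {s : Finset (Fin n) // s.card = c} :=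
  if h : m ∈ S.1 ∨ ¬S.1.Nonempty then S
  else
    ⟨insert m (S.1.erase (Classical.choose
        (Finset.exists_min_image S.1 y (not_not.mp (mt Or.inr h))))),
     by
       have hm : m ∉ S.1 := fun hm => h (Or.inl hm)
       have hne : S.1.Nonempty := not_not.mp (mt Or.inr h)
       have hj := (Classical.choose_spec
         (Finset.exists_min_image S.1 y (not_not.mp (mt Or.inr h)))).1
       have hc : 0 < c := by rw [← S.2]; exact Finset.card_pos.mpr hne
       rw [Finset.card_insert_of_notMem (fun hmem => hm (Finset.mem_erase.mp hmem).2),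
         Finset.card_erase_of_mem hj, S.2]
       exact Nat.succ_pred_eq_of_pos hc⟩

/-- Key lemma (Lemma 2): playing against `M_n`, for every row-player strategy `x` there is
a column `m` such that whenever the column player's strategy `y` puts probability at least
`p` on `m`, the row player has an improved response `x*` gaining at least
`(1 - k/n)(p - (1-p)/k) ≥ p - 1/k`. -/
theorem stmt_5 (n : ℕ) (hn : 1 ≤ n)
    (M : {s : Finset (Fin n) // s.card = Nat.sqrt n} → Fin n → ℝ)
    (hM : ∀ S j, M S j = if j ∈ S.1 then (1:ℝ) else 0)
    (x : {s : Finset (Fin n) // s.card = Nat.sqrt n} → ℝ)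
    (hx0 : ∀ S, 0 ≤ x S) (hx1 : ∑ S, x S = 1) :
    ∃ m : Fin n, ∀ (p : ℝ) (y : Fin n → ℝ), 0 ≤ p →
      (∀ j, 0 ≤ y j) → (∑ j, y j) = 1 → p ≤ y m →
      ∃ xs : {s : Finset (Fin n) // s.card = Nat.sqrt n} → ℝ,
        (∀ S, 0 ≤ xs S) ∧ (∑ S, xs S) = 1 ∧
        (∑ S, ∑ j, xs S * M S j * y j) - (∑ S, ∑ j, x S * M S j * y j)
          ≥ (1 - (Nat.sqrt n : ℝ) / n) * (p - (1 - p) / (Nat.sqrt n : ℝ)) ∧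
        (1 - (Nat.sqrt n : ℝ) / n) * (p - (1 - p) / (Nat.sqrt n : ℝ))
          ≥ p - 1 / (Nat.sqrt n : ℝ) := by
  classical
  have hk1 : 1 ≤ Nat.sqrt n := Nat.sqrt_pos.mpr hn
  have hkk : Nat.sqrt n ^ 2 ≤ n := Nat.sqrt_le' n
  have hkn : Nat.sqrt n ≤ n := Nat.sqrt_le_self n
  have hkr1 : (1:ℝ) ≤ (Nat.sqrt n : ℝ) := by exact_mod_cast hk1
  have h0k : (0:ℝ) < (Nat.sqrt n : ℝ) := by linarith
  have h0n : (0:ℝ) < (n:ℝ) := by exact_mod_cast hn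
  have hkkR : ((Nat.sqrt n : ℝ)) ^ 2 ≤ (n:ℝ) := by exact_mod_cast hkk
  have hknR : (Nat.sqrt n : ℝ) ≤ (n:ℝ) := by exact_mod_cast hkn
  have hA : (0:ℝ) ≤ 1 - (Nat.sqrt n : ℝ) / (n:ℝ) := by
    rw [sub_nonneg, div_le_one h0n]; exact hknR
  -- marginal probability of each column
  set q : Fin n → ℝ := fun j => ∑ S, if j ∈ S.1 then x S else 0 with hq
  have : Nonempty (Fin n) := ⟨⟨0, hn⟩⟩
  obtain ⟨m, -, hmmin⟩ := Finset.exists_min_image Finset.univ q Finset.univ_nonempty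
  -- total marginal mass is k
  have hqsum : ∑ j, q j = (Nat.sqrt n : ℝ) := by
    rw [hq, Finset.sum_comm]
    have h1 : ∀ S : {s : Finset (Fin n) // s.card = Nat.sqrt n},
        (∑ j, if j ∈ S.1 then x S else 0) = (Nat.sqrt n : ℝ) * x S := by
      intro S
      rw [Finset.sum_ite_mem, Finset.univ_inter, Finset.sum_const, S.2, nsmul_eq_mul]
    rw [Finset.sum_congr rfl (fun S _ => h1 S), ← Finset.mul_sum, hx1, mul_one]
  have hqm : q m ≤ (Nat.sqrt n : ℝ) / (n:ℝ) := by
    rw [le_div_iff₀ h0n]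
    calc q m * (n:ℝ) = ∑ _j : Fin n, q m := by
          rw [Finset.sum_const, Finset.card_univ, Fintype.card_fin, nsmul_eq_mul, mul_comm]
      _ ≤ ∑ j, q j := Finset.sum_le_sum (fun j _ => hmmin j (Finset.mem_univ j))
      _ = (Nat.sqrt n : ℝ) := hqsum
  refine ⟨m, ?_⟩
  intro p y hp hy0 hy1 hpm
  have hym1 : y m ≤ 1 := by
    have := Finset.single_le_sum (f := y) (fun j _ => hy0 j) (Finset.mem_univ m)
    linarith [hy1 ▸ this]
  have hp1 : p ≤ 1 := le_trans hpm hym1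
  -- last inequality (pure arithmetic)
  have hfinal : (1 - (Nat.sqrt n : ℝ) / n) * (p - (1 - p) / (Nat.sqrt n : ℝ))
      ≥ p - 1 / (Nat.sqrt n : ℝ) := by
    rw [ge_iff_le, ← sub_nonneg]
    have hid : (1 - (Nat.sqrt n : ℝ) / n) * (p - (1 - p) / (Nat.sqrt n : ℝ))
          - (p - 1 / (Nat.sqrt n : ℝ))
        = (p * ((n:ℝ) - (Nat.sqrt n : ℝ) ^ 2 - (Nat.sqrt n : ℝ)) + (Nat.sqrt n : ℝ))
          / ((Nat.sqrt n : ℝ) * (n:ℝ)) := by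
      field_simp; ring
    rw [hid]
    apply div_nonneg _ (by positivity)
    nlinarith [mul_nonneg hp (sub_nonneg.mpr hkkR), mul_nonneg (sub_nonneg.mpr hp1) h0k.le]
  -- payoff rewriting
  have hpay : ∀ z : {s : Finset (Fin n) // s.card = Nat.sqrt n} → ℝ,
      (∑ S, ∑ j, z S * M S j * y j) = ∑ S, z S * ∑ j ∈ S.1, y j := by
    intro z
    refine Finset.sum_congr rfl (fun S _ => ?_)
    have h1 : ∀ j, z S * M S j * y j = if j ∈ S.1 then z S * y j else 0 := by
      intro j; rw [hM]; split <;> ring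
    rw [Finset.sum_congr rfl (fun j _ => h1 j), Finset.sum_ite_mem, Finset.univ_inter,
      Finset.mul_sum]
  set g : {s : Finset (Fin n) // s.card = Nat.sqrt n} → ℝ := fun S => ∑ j ∈ S.1, y j with hg
  by_cases hC : p - (1 - p) / (Nat.sqrt n : ℝ) ≤ 0
  · refine ⟨x, hx0, hx1, ?_, hfinal⟩
    rw [sub_self]
    exact mul_nonpos_of_nonneg_of_nonpos hA hC
  · push_neg at hC
    -- the improved response: push mass through the swap map
    set φ := swapFun y m (c := Nat.sqrt n) with hφ
    set xs : {s : Finset (Fin n) // s.card = Nat.sqrt n} → ℝ :=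
      fun T => ∑ S ∈ Finset.univ.filter (fun S => φ S = T), x S with hxs
    have hxs0 : ∀ T, 0 ≤ xs T := fun T => Finset.sum_nonneg (fun S _ => hx0 S)
    have hxs1 : ∑ T, xs T = 1 := by
      rw [hxs]; rw [Finset.sum_fiberwise Finset.univ φ x]; exact hx1
    have hxspay : ∑ T, xs T * g T = ∑ S, x S * g (φ S) := by
      rw [hxs]
      rw [← Finset.sum_fiberwise Finset.univ φ (fun S => x S * g (φ S))]
      refine Finset.sum_congr rfl (fun T _ => ?_)
      rw [Finset.sum_mul]
      refine Finset.sum_congr rfl (fun S hS => ?_)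
      rw [(Finset.mem_filter.mp hS).2]
    -- per-set gain bound
    set C : ℝ := y m - (1 - y m) / (Nat.sqrt n : ℝ) with hCdef
    have hterm : ∀ S, (if m ∈ S.1 then 0 else x S * C) ≤ x S * (g (φ S) - g S) := by
      intro S
      have hSne : S.1.Nonempty := Finset.card_pos.mp (by rw [S.2]; exact hk1)
      by_cases hm : m ∈ S.1
      · have hid : φ S = S := by rw [hφ, swapFun, dif_pos (Or.inl hm)]
        rw [hid]; simp [hm]
      · rw [if_neg hm]
        have hcond : ¬(m ∈ S.1 ∨ ¬S.1.Nonempty) := by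
          push_neg; exact ⟨hm, hSne⟩
        set j₀ := Classical.choose
          (Finset.exists_min_image S.1 y (not_not.mp (mt Or.inr hcond))) with hj₀def
        obtain ⟨hj₀mem, hj₀min⟩ := Classical.choose_spec
          (Finset.exists_min_image S.1 y (not_not.mp (mt Or.inr hcond)))
        have hφS : (φ S).1 = insert m (S.1.erase j₀) := by
          rw [hφ, swapFun, dif_neg hcond]
        -- g (φ S) = y m + (g S - y j₀)
        have hgφ : g (φ S) = y m + (g S - y j₀) := by
          rw [hg]
          simp only
          rw [hφS, Finset.sum_insert (fun hmem => hm (Finset.mem_erase.mp hmem).2)]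
          have h1 := Finset.sum_erase_add S.1 y hj₀mem
          have h2 : ∑ j ∈ S.1.erase j₀, y j = (∑ j ∈ S.1, y j) - y j₀ := by linarith
          rw [h2]
        -- y j₀ ≤ (1 - y m)/k
        have hSsub : ∑ j ∈ S.1, y j ≤ 1 - y m := by
          have hsub : S.1 ⊆ Finset.univ.erase m := fun j hj =>
            Finset.mem_erase.mpr ⟨fun h => hm (h ▸ hj), Finset.mem_univ j⟩
          have h1 : ∑ j ∈ S.1, y j ≤ ∑ j ∈ Finset.univ.erase m, y j :=
            Finset.sum_le_sum_of_subset_of_nonneg hsub (fun j _ _ => hy0 j)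
          have h2 := Finset.sum_erase_add Finset.univ y (Finset.mem_univ m)
          rw [hy1] at h2
          linarith
        have hmin : (Nat.sqrt n : ℝ) * y j₀ ≤ ∑ j ∈ S.1, y j := by
          have h1 := Finset.card_nsmul_le_sum S.1 y (y j₀) hj₀min
          rw [S.2, nsmul_eq_mul] at h1
          exact_mod_cast h1
        have hj₀le : y j₀ ≤ (1 - y m) / (Nat.sqrt n : ℝ) := by
          rw [le_div_iff₀ h0k]; nlinarith
        have hdiff : C ≤ g (φ S) - g S := by
          rw [hgφ, hCdef]; linarith
        exact mul_le_mul_of_nonneg_left hdiff (hx0 S)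
    -- sum the per-set bounds
    have hsplit : q m + ∑ S, (if m ∈ S.1 then 0 else x S) = 1 := by
      rw [hq, ← Finset.sum_add_distrib, ← hx1]
      refine Finset.sum_congr rfl (fun S _ => ?_)
      split <;> simp
    have hgain : (1 - q m) * C ≤ ∑ S, x S * (g (φ S) - g S) := by
      have h1 : ∑ S, (if m ∈ S.1 then 0 else x S * C)
          ≤ ∑ S, x S * (g (φ S) - g S) :=
        Finset.sum_le_sum (fun S _ => hterm S)
      have h2 : ∑ S, (if m ∈ S.1 then 0 else x S * C)
          = (∑ S, (if m ∈ S.1 then 0 else x S)) * C := by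
        rw [Finset.sum_mul]
        refine Finset.sum_congr rfl (fun S _ => ?_)
        split <;> simp
      rw [h2] at h1
      have h3 : (∑ S : {s : Finset (Fin n) // s.card = Nat.sqrt n},
          (if m ∈ S.1 then 0 else x S)) = 1 - q m := by linarith
      rw [h3] at h1
      exact h1
    have hCC : (1 - (Nat.sqrt n : ℝ) / n) * (p - (1 - p) / (Nat.sqrt n : ℝ))
        ≤ (1 - q m) * C := by
      have hCge : p - (1 - p) / (Nat.sqrt n : ℝ) ≤ C := by
        rw [hCdef]
        have h1 : (1 - y m) / (Nat.sqrt n : ℝ) ≤ (1 - p) / (Nat.sqrt n : ℝ) := by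
          gcongr
        linarith
      have hqm' : 1 - (Nat.sqrt n : ℝ) / n ≤ 1 - q m := by linarith
      exact mul_le_mul hqm' hCge hC.le (by linarith)
    refine ⟨xs, hxs0, hxs1, ?_, hfinal⟩
    rw [hpay xs, hpay x, hxspay]
    have hid : ∑ S, x S * g (φ S) - ∑ S, x S * g S = ∑ S, x S * (g (φ S) - g S) := by
      rw [← Finset.sum_sub_distrib]
      exact Finset.sum_congr rfl (fun S _ => by ring)
    rw [hid]
    exact le_trans hCC hgain
end

section
/- Let α = (5 − √17)/2. Then for all β with α ≤ β ≤ 1, the inequality (1 − α/2)·α + (α/2)·β ≥ β − α holds. Moreover, α = (5 − √17)/2 is the smallest α ∈ (0,1) for which this inequality holds for all β ∈ [α, 1]. -/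
/-!
The gap between the two sides equals `(1 - β)(1 - α/2) - (α² - 5α + 2)/2`, so for `α ≤ 2` it is
smallest at `β = 1`, and the inequality holds for all `β ≤ 1` exactly when `α² - 5α + 2 ≤ 0`.
The smaller root of this quadratic is `(5 - √17)/2`.
-/

namespace ShiftRegret

lemma sq_sub_five_mul_add_two_eq (α : ℝ) :
    α ^ 2 - 5 * α + 2 = (α - (5 - √17) / 2) * (α - (5 + √17) / 2) := by
  have h17 : √17 ^ 2 = 17 := Real.sq_sqrt (by norm_num)
  linear_combination h17 / 4

lemma three_le_sqrt_seventeen : (3 : ℝ) ≤ √17 :=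
  Real.le_sqrt_of_sq_le (by norm_num)

lemma le_of_sq_sub_five_mul_add_two_nonpos {α : ℝ} (h : α ^ 2 - 5 * α + 2 ≤ 0) :
    (5 - √17) / 2 ≤ α := by
  by_contra! hlt
  have hroots : (5 - √17) / 2 ≤ (5 + √17) / 2 := by linarith [Real.sqrt_nonneg 17]
  have hpos : 0 < (α - (5 - √17) / 2) * (α - (5 + √17) / 2) :=
    mul_pos_of_neg_of_neg (by linarith) (by linarith)
  rw [sq_sub_five_mul_add_two_eq] at h
  linarith

lemma sq_sub_five_mul_add_two_nonpos {α : ℝ} (hα : (5 - √17) / 2 ≤ α) (hα1 : α ≤ 1) :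
    α ^ 2 - 5 * α + 2 ≤ 0 := by
  rw [sq_sub_five_mul_add_two_eq]
  exact mul_nonpos_of_nonneg_of_nonpos (by linarith)
    (by linarith [three_le_sqrt_seventeen])

lemma shift_gap_eq (α β : ℝ) :
    (1 - α / 2) * α + (α / 2) * β - (β - α) =
      (1 - β) * (1 - α / 2) - (α ^ 2 - 5 * α + 2) / 2 := by
  ring

lemma shift_bound_of_sq_nonpos {α β : ℝ} (hα : α ≤ 2) (hβ : β ≤ 1)
    (h : α ^ 2 - 5 * α + 2 ≤ 0) : (1 - α / 2) * α + (α / 2) * β ≥ β - α := by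
  have hgap := shift_gap_eq α β
  have hprod : 0 ≤ (1 - β) * (1 - α / 2) := mul_nonneg (by linarith) (by linarith)
  linarith

lemma sq_nonpos_of_shift_bound_one {α : ℝ} (h : (1 - α / 2) * α + (α / 2) * 1 ≥ 1 - α) :
    α ^ 2 - 5 * α + 2 ≤ 0 := by
  linarith [shift_gap_eq α 1]

end ShiftRegret

open ShiftRegret in
/-- For `α = (5 − √17)/2` and all `β ∈ [α, 1]`, `(1 − α/2)α + (α/2)β ≥ β − α`;
moreover `(5 − √17)/2` is the smallest `α ∈ (0, 1)` for which this holds for all such `β`. -/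
theorem stmt_8 :
    (∀ β : ℝ, (5 - Real.sqrt 17) / 2 ≤ β → β ≤ 1 →
      (1 - (5 - Real.sqrt 17) / 2 / 2) * ((5 - Real.sqrt 17) / 2)
        + ((5 - Real.sqrt 17) / 2 / 2) * β ≥ β - (5 - Real.sqrt 17) / 2) ∧
    (∀ α : ℝ, 0 < α → α < 1 →
      (∀ β : ℝ, α ≤ β → β ≤ 1 → (1 - α / 2) * α + (α / 2) * β ≥ β - α) →
      (5 - Real.sqrt 17) / 2 ≤ α) := by
  have ha1 : (5 - √17) / 2 ≤ 1 := by linarith [three_le_sqrt_seventeen]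
  refine ⟨fun β _ hβ1 => ?_, fun α _ hα1 h => ?_⟩
  · exact shift_bound_of_sq_nonpos (by linarith) hβ1 (sq_sub_five_mul_add_two_nonpos le_rfl ha1)
  · exact le_of_sq_sub_five_mul_add_two_nonpos
      (sq_nonpos_of_shift_bound_one (h 1 hα1.le le_rfl))
end

section
/- Consider a two-player game where each player's payoff matrix has entries in [0,1]. Suppose the zero-sum game (R, −R) has value at most α for the row player and the zero-sum game (−C, C) has value at most α for the column player. Let (x_r*, y_r*) be a Nash equilibrium of (R, −R) and (x_c*, y_c*) a Nash equilibrium of (−C, C). Then the strategy profile (x_c*, y_r*) is an α-approximate Nash equilibrium of (R, C). -/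
open Finset

/-- Expected payoff in a bimatrix game. -/
def payoff {n m : ℕ} (A : Fin n → Fin m → ℝ) (x : Fin n → ℝ) (y : Fin m → ℝ) : ℝ :=
  ∑ a, ∑ b, x a * A a b * y b

/-- The pure strategy `e_i`. -/
def pure' {n : ℕ} (i : Fin n) : Fin n → ℝ := fun a => if a = i then 1 else 0

/-- A probability distribution on `Fin n`. -/
def isDist {n : ℕ} (x : Fin n → ℝ) : Prop := (∀ a, 0 ≤ x a) ∧ ∑ a, x a = 1

lemma payoff_nonneg {n m : ℕ} {A : Fin n → Fin m → ℝ} {x : Fin n → ℝ} {y : Fin m → ℝ}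
    (hA : ∀ a b, 0 ≤ A a b) (hx : ∀ a, 0 ≤ x a) (hy : ∀ b, 0 ≤ y b) :
    0 ≤ payoff A x y :=
  sum_nonneg fun a _ => sum_nonneg fun b _ => mul_nonneg (mul_nonneg (hx a) (hA a b)) (hy b)

theorem stmt_10_general (n m : ℕ) (R C : Fin n → Fin m → ℝ) (α : ℝ)
    (hR : ∀ a b, R a b ∈ Set.Icc (0:ℝ) 1) (hC : ∀ a b, C a b ∈ Set.Icc (0:ℝ) 1)
    (xr xc : Fin n → ℝ) (yr yc : Fin m → ℝ)
    (hyr : isDist yr) (hxc : isDist xc)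
    -- (xr, yr) is a Nash equilibrium of the zero-sum game (R, −R):
    (hNEr1 : ∀ i : Fin n, payoff R (pure' i) yr ≤ payoff R xr yr)
    -- (xc, yc) is a Nash equilibrium of the zero-sum game (−C, C):
    (hNEc2 : ∀ j : Fin m, payoff C xc (pure' j) ≤ payoff C xc yc)
    -- values are at most α for each player:
    (hvR : payoff R xr yr ≤ α) (hvC : payoff C xc yc ≤ α) :
    (∀ i : Fin n, payoff R (pure' i) yr ≤ payoff R xc yr + α) ∧
    (∀ j : Fin m, payoff C xc (pure' j) ≤ payoff C xc yr + α) := by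
  -- Against `yr` (resp. `xc`) no deviation earns more than the zero-sum value `α`,
  -- while the current payoffs are nonnegative.
  have hRnonneg : 0 ≤ payoff R xc yr := payoff_nonneg (fun a b => (hR a b).1) hxc.1 hyr.1
  have hCnonneg : 0 ≤ payoff C xc yr := payoff_nonneg (fun a b => (hC a b).1) hxc.1 hyr.1
  exact ⟨fun i => by linarith [hNEr1 i], fun j => by linarith [hNEc2 j]⟩

/-- If both players' zero-sum games `(R,−R)` and `(−C,C)` have value at most `α`, and
`(x_r*,y_r*)`, `(x_c*,y_c*)` are respective Nash equilibria, then `(x_c*, y_r*)` is an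
`α`-approximate Nash equilibrium of `(R,C)`. -/
theorem stmt_10 (n m : ℕ) (R C : Fin n → Fin m → ℝ) (α : ℝ)
    (hR : ∀ a b, R a b ∈ Set.Icc (0:ℝ) 1) (hC : ∀ a b, C a b ∈ Set.Icc (0:ℝ) 1)
    (xr xc : Fin n → ℝ) (yr yc : Fin m → ℝ)
    (hxr : isDist xr) (hyr : isDist yr) (hxc : isDist xc) (hyc : isDist yc)
    -- (xr, yr) is a Nash equilibrium of the zero-sum game (R, −R):
    (hNEr1 : ∀ i : Fin n, payoff R (pure' i) yr ≤ payoff R xr yr)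
    (hNEr2 : ∀ j : Fin m, payoff (fun a b => -R a b) xr (pure' j)
              ≤ payoff (fun a b => -R a b) xr yr)
    -- (xc, yc) is a Nash equilibrium of the zero-sum game (−C, C):
    (hNEc1 : ∀ i : Fin n, payoff (fun a b => -C a b) (pure' i) yc
              ≤ payoff (fun a b => -C a b) xc yc)
    (hNEc2 : ∀ j : Fin m, payoff C xc (pure' j) ≤ payoff C xc yc)
    -- values are at most α for each player:
    (hvR : payoff R xr yr ≤ α) (hvC : payoff C xc yc ≤ α) :
    (∀ i : Fin n, payoff R (pure' i) yr ≤ payoff R xc yr + α) ∧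
    (∀ j : Fin m, payoff C xc (pure' j) ≤ payoff C xc yr + α) :=
  stmt_10_general n m R C α hR hC xr xc yr yc hyr hxc hNEr1 hNEc2 hvR hvC
end

section
/- Under the same hypotheses (value of (R,−R) at most α for the row player and value of (−C,C) at most α for the column player), the profile (x_c*, y_r*) is also an α-well-supported Nash equilibrium of (R,C), since every pure strategy of each player has payoff at most α against the opponent's strategy. -/
open Finset

lemma pure'_nonneg {n : ℕ} (i : Fin n) : ∀ a, 0 ≤ pure' i a := fun a => by
  unfold pure'
  split_ifs <;> norm_num

theorem stmt_11_general (n m : ℕ) (R C : Fin n → Fin m → ℝ) (α : ℝ)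
    (hR : ∀ a b, R a b ∈ Set.Icc (0:ℝ) 1) (hC : ∀ a b, C a b ∈ Set.Icc (0:ℝ) 1)
    (xr xc : Fin n → ℝ) (yr yc : Fin m → ℝ)
    (hyr : isDist yr) (hxc : isDist xc)
    -- (xr, yr) is a Nash equilibrium of the zero-sum game (R, −R):
    (hNEr1 : ∀ i : Fin n, payoff R (pure' i) yr ≤ payoff R xr yr)
    (hNEc2 : ∀ j : Fin m, payoff C xc (pure' j) ≤ payoff C xc yc)
    -- values are at most α for each player:
    (hvR : payoff R xr yr ≤ α) (hvC : payoff C xc yc ≤ α) :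
    (∀ i : Fin n, 0 < xc i →
      ∀ i' : Fin n, payoff R (pure' i') yr ≤ payoff R (pure' i) yr + α) ∧
    (∀ j : Fin m, 0 < yr j →
      ∀ j' : Fin m, payoff C xc (pure' j') ≤ payoff C xc (pure' j) + α) := by
  constructor
  · intro i _ i'
    have hi : 0 ≤ payoff R (pure' i) yr :=
      payoff_nonneg (fun a b => (hR a b).1) (pure'_nonneg i) hyr.1
    exact le_add_of_nonneg_of_le hi ((hNEr1 i').trans hvR)
  · intro j _ j'
    have hj : 0 ≤ payoff C xc (pure' j) :=
      payoff_nonneg (fun a b => (hC a b).1) hxc.1 (pure'_nonneg j)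
    exact le_add_of_nonneg_of_le hj ((hNEc2 j').trans hvC)

/-- Under the same hypotheses as before (both zero-sum games have value at most `α`),
the profile `(x_c*, y_r*)` is an `α`-well-supported Nash equilibrium of `(R,C)`:
every pure strategy in the support of each player's strategy is an `α`-best response. -/
theorem stmt_11 (n m : ℕ) (R C : Fin n → Fin m → ℝ) (α : ℝ)
    (hR : ∀ a b, R a b ∈ Set.Icc (0:ℝ) 1) (hC : ∀ a b, C a b ∈ Set.Icc (0:ℝ) 1)
    (xr xc : Fin n → ℝ) (yr yc : Fin m → ℝ)
    (hxr : isDist xr) (hyr : isDist yr) (hxc : isDist xc) (hyc : isDist yc)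
    -- (xr, yr) is a Nash equilibrium of the zero-sum game (R, −R):
    (hNEr1 : ∀ i : Fin n, payoff R (pure' i) yr ≤ payoff R xr yr)
    (hNEr2 : ∀ j : Fin m, payoff (fun a b => -R a b) xr (pure' j)
              ≤ payoff (fun a b => -R a b) xr yr)
    -- (xc, yc) is a Nash equilibrium of the zero-sum game (−C, C):
    (hNEc1 : ∀ i : Fin n, payoff (fun a b => -C a b) (pure' i) yc
              ≤ payoff (fun a b => -C a b) xc yc)
    (hNEc2 : ∀ j : Fin m, payoff C xc (pure' j) ≤ payoff C xc yc)
    -- values are at most α for each player: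
    (hvR : payoff R xr yr ≤ α) (hvC : payoff C xc yc ≤ α) :
    (∀ i : Fin n, 0 < xc i →
      ∀ i' : Fin n, payoff R (pure' i') yr ≤ payoff R (pure' i) yr + α) ∧
    (∀ j : Fin m, 0 < yr j →
      ∀ j' : Fin m, payoff C xc (pure' j') ≤ payoff C xc (pure' j) + α) :=
  stmt_11_general n m R C α hR hC xr xc yr yc hyr hxc hNEr1 hNEc2 hvR hvC
end

section
/- Consider the 2×2 bimatrix games (R, C^1) and (R, C^2) where R is the identity matrix, C^1 has both rows equal to (1,0), and C^2 has both rows equal to (0,1). For any ε < 1: in any ε-well-supported Nash equilibrium of (R, C^j), the column player plays pure strategy j. Consequently there is no single row-player mixed strategy x such that (x, e_1) is an ε-WSNE of (R,C^1) and (x, e_2) is an ε-WSNE of (R,C^2). -/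
open Finset

/-- A probability distribution on `Fin 2`. -/
def isDist2 (x : Fin 2 → ℝ) : Prop := (∀ a, 0 ≤ x a) ∧ ∑ a, x a = 1

/-- `(x,y)` is an `ε`-well-supported Nash equilibrium of the 2×2 bimatrix game `(A,B)`. -/
def isWSNE (ε : ℝ) (A B : Fin 2 → Fin 2 → ℝ) (x y : Fin 2 → ℝ) : Prop :=
  (∀ i : Fin 2, 0 < x i → ∀ i' : Fin 2, ∑ j, A i' j * y j ≤ (∑ j, A i j * y j) + ε) ∧
  (∀ j : Fin 2, 0 < y j → ∀ j' : Fin 2, ∑ i, x i * B i j' ≤ (∑ i, x i * B i j) + ε)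

/-!
A column that is beaten by a margin `δ > ε` in every row is beaten by `δ` against every mixed
row strategy, so it cannot lie in the support of an `ε`-WSNE. In `(R, Cʲ)` the column `j` dominates
the other by `1`, which forces the column player onto `j`. Against the pure column `eⱼ` the identity
payoff `R` rewards only row `j`, so the row player must put all his weight on row `j`; no single
`x` does this for both `j = 1` and `j = 2`.
-/

section

variable {ε δ : ℝ} {A B : Fin 2 → Fin 2 → ℝ} {x y : Fin 2 → ℝ}

theorem isDist2.add_eq_one (hx : isDist2 x) : x 0 + x 1 = 1 := by
  simpa [Fin.sum_univ_two] using hx.2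

theorem isDist2.add_le_sum_mul (hx : isDist2 x) {j j' : Fin 2} (hB : ∀ i, B i j + δ ≤ B i j') :
    ∑ i, x i * B i j + δ ≤ ∑ i, x i * B i j' :=
  calc ∑ i, x i * B i j + δ = ∑ i, x i * (B i j + δ) := by
        simp only [mul_add, sum_add_distrib, ← sum_mul, hx.2, one_mul]
    _ ≤ ∑ i, x i * B i j' := sum_le_sum fun i _ => mul_le_mul_of_nonneg_left (hB i) (hx.1 i)

theorem isWSNE.eq_zero_of_row_gap (h : isWSNE ε A B x y) (hx : isDist2 x) {i i' : Fin 2}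
    (hgap : ∑ j, A i j * y j + ε < ∑ j, A i' j * y j) : x i = 0 := by
  by_contra hne
  linarith [h.1 i ((hx.1 i).lt_of_ne' hne) i']

theorem isWSNE.eq_zero_of_col_gap (h : isWSNE ε A B x y) (hy : isDist2 y) {j j' : Fin 2}
    (hgap : ∑ i, x i * B i j + ε < ∑ i, x i * B i j') : y j = 0 := by
  by_contra hne
  linarith [h.2 j ((hy.1 j).lt_of_ne' hne) j']

theorem isWSNE.eq_zero_of_dominated (h : isWSNE ε A B x y) (hx : isDist2 x) (hy : isDist2 y)
    {j j' : Fin 2} (hB : ∀ i, B i j + δ ≤ B i j') (hε : ε < δ) : y j = 0 :=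
  h.eq_zero_of_col_gap hy (j' := j') (by linarith [hx.add_le_sum_mul hB])

end

/-- Lower bound for one-way communication and well-supported equilibria: with
`R = I`, `C¹` paying 1 in column 1 only, and `C²` paying 1 in column 2 only, any
`ε`-WSNE (`ε < 1`) of `(R, Cʲ)` has the column player playing the pure strategy `j`;
and no single row strategy `x` works for both games. -/
theorem stmt_14 (ε : ℝ) (hε : ε < 1) :
    let R : Fin 2 → Fin 2 → ℝ := fun i j => if i = j then 1 else 0
    let C1 : Fin 2 → Fin 2 → ℝ := fun _ j => if j = 0 then 1 else 0
    let C2 : Fin 2 → Fin 2 → ℝ := fun _ j => if j = 1 then 1 else 0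
    (∀ x y : Fin 2 → ℝ, isDist2 x → isDist2 y → isWSNE ε R C1 x y → y 0 = 1) ∧
    (∀ x y : Fin 2 → ℝ, isDist2 x → isDist2 y → isWSNE ε R C2 x y → y 1 = 1) ∧
    ¬ ∃ x : Fin 2 → ℝ, isDist2 x ∧
        isWSNE ε R C1 x (fun j => if j = 0 then 1 else 0) ∧
        isWSNE ε R C2 x (fun j => if j = 1 then 1 else 0) := by
  intro R C1 C2
  refine ⟨fun x y hx hy h => ?_, fun x y hx hy h => ?_, ?_⟩
  · have hy1 : y 1 = 0 := h.eq_zero_of_dominated hx hy (j' := 0) (fun _ => by simp [C1]) hε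
    linarith [hy.add_eq_one]
  · have hy0 : y 0 = 0 := h.eq_zero_of_dominated hx hy (j' := 1) (fun _ => by simp [C2]) hε
    linarith [hy.add_eq_one]
  · rintro ⟨x, hx, h1, h2⟩
    have hx1 : x 1 = 0 := h1.eq_zero_of_row_gap hx (i' := 0) (by simp [R, hε])
    have hx0 : x 0 = 0 := h2.eq_zero_of_row_gap hx (i' := 1) (by simp [R, hε])
    linarith [hx.add_eq_one]
end
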